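/- For t ≥ 0 define u_t : (0,1) → ℝ by u_t(x) = x log x + (1−x) log(1−x) + t|x − 1/2|, and define φ_t(ρ) = sup_{x∈(0,1)} ( ρx − u_t(x) ) for ρ ∈ ℝ. Then for each fixed t > 0 the function φ_t is differentiable on ℝ with locally Lipschitz derivative, but φ_t is not twice differentiable at ρ = t: its derivative φ_t′ equals 1/2 on (−t, t) and equals e^{ρ−t}/(1 + e^{ρ−t}) on (t, ∞), so the left-hand derivative of φ_t′ at ρ = t equals 0 while the right-hand derivative equals 1/4. In particular φ_t is C^{1,1} but not C². -/

import Mathlib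

/-- The symplectic potential `u_t(x) = x log x + (1−x) log(1−x) + t|x − 1/2|`. -/
noncomputable def sympPot (t x : ℝ) : ℝ :=
  x * Real.log x + (1 - x) * Real.log (1 - x) + t * |x - 1 / 2|

/-- The Kähler potential `φ_t(ρ) = sup_{x∈(0,1)} ( ρx − u_t(x) )`. -/
noncomputable def kahlerPot (t ρ : ℝ) : ℝ :=
  sSup ((fun x => ρ * x - sympPot t x) '' Set.Ioo (0 : ℝ) 1)

/-!
Writing `u_t = -binEntropy + t|x - 1/2|` and `t|x - 1/2| = max_{|a| ≤ t} a (x - 1/2)`, the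
supremum defining `φ_t(ρ)` is attained at `x = σ(S_t ρ)`, where `σ` is the logistic sigmoid and
`S_t ρ = ρ - proj_{[-t,t]} ρ` is the soft threshold: the Legendre dual of `-binEntropy` is
`s ↦ log (1 + e^s)` with maximiser `σ(s)`, and for the slope `a = proj_{[-t,t]} ρ` the bound
`a (x - 1/2) ≤ t |x - 1/2|` is an equality at that maximiser.

A supremum of affine functions of `ρ` whose maximiser is continuous in `ρ` is differentiable, with
derivative the maximiser. Hence `φ_t' = σ ∘ S_t`: locally Lipschitz, constant on `[-t, t]`, and
equal to `σ(ρ - t)` for `ρ ≥ t`, whose slope at `t` is `σ'(0) = 1/4`.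
-/

open Real Set Filter Topology

lemma hasDerivAt_of_subgradient {f g : ℝ → ℝ} {x : ℝ}
    (hsub : ∀ y z, f y + (z - y) * g y ≤ f z) (hg : ContinuousAt g x) :
    HasDerivAt f (g x) x := by
  rw [hasDerivAt_iff_isLittleO, Asymptotics.isLittleO_iff]
  intro c hc
  filter_upwards [Metric.continuousAt_iff'.mp hg c hc] with y hy
  rw [Real.dist_eq] at hy
  have hlow := hsub x y
  have hupp := hsub y x
  simp only [Real.norm_eq_abs, smul_eq_mul]
  calc |f y - f x - (y - x) * g x|
      = f y - f x - (y - x) * g x := abs_of_nonneg (by linarith)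
    _ ≤ (y - x) * (g y - g x) := by linarith
    _ ≤ |y - x| * |g y - g x| := by rw [← abs_mul]; exact le_abs_self _
    _ ≤ c * |y - x| := by rw [mul_comm]; gcongr

lemma not_differentiableAt_of_hasDerivWithinAt_Iic_Ici {E : Type*} [NormedAddCommGroup E]
    [NormedSpace ℝ E] {f : ℝ → E} {x : ℝ} {a b : E} (hl : HasDerivWithinAt f a (Iic x) x)
    (hr : HasDerivWithinAt f b (Ici x) x) (hab : a ≠ b) : ¬ DifferentiableAt ℝ f x := by
  intro hf
  have ha := (uniqueDiffWithinAt_Iic x).eq_deriv _ hl hf.hasDerivAt.hasDerivWithinAt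
  have hb := (uniqueDiffWithinAt_Ici x).eq_deriv _ hr hf.hasDerivAt.hasDerivWithinAt
  exact hab (ha.trans hb.symm)

lemma mul_log_div_le_sub {p x : ℝ} (hp : 0 < p) (hx : 0 < x) : x * log (p / x) ≤ p - x :=
  calc x * log (p / x) ≤ x * (p / x - 1) := by
        gcongr; exact log_le_sub_one_of_pos (div_pos hp hx)
    _ = p - x := by field_simp

lemma binEntropy_le_crossEntropy {p x : ℝ} (hp : p ∈ Ioo 0 1) (hx : x ∈ Ioo 0 1) :
    binEntropy x ≤ -(x * log p + (1 - x) * log (1 - p)) := by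
  obtain ⟨hp₀, hp₁⟩ := hp
  obtain ⟨hx₀, hx₁⟩ := hx
  have h₁ := mul_log_div_le_sub hp₀ hx₀
  have h₂ := mul_log_div_le_sub (sub_pos.2 hp₁) (sub_pos.2 hx₁)
  rw [log_div hp₀.ne' hx₀.ne'] at h₁
  rw [log_div (sub_pos.2 hp₁).ne' (sub_pos.2 hx₁).ne'] at h₂
  simp only [binEntropy, log_inv]
  linarith

lemma sigmoid_mem_Ioo (s : ℝ) : sigmoid s ∈ Ioo 0 1 := ⟨sigmoid_pos s, sigmoid_lt_one s⟩

lemma sigmoid_eq_exp_div (s : ℝ) : sigmoid s = exp s / (1 + exp s) := by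
  rw [sigmoid_def, exp_neg]
  field_simp
  ring

lemma log_sigmoid (s : ℝ) : log (sigmoid s) = s - log (1 + exp s) := by
  rw [sigmoid_eq_exp_div, log_div (exp_pos s).ne' (by positivity), log_exp]

lemma log_one_sub_sigmoid (s : ℝ) : log (1 - sigmoid s) = -log (1 + exp s) := by
  rw [← sigmoid_neg, sigmoid_def, neg_neg, log_inv]

lemma mul_add_binEntropy_le {x : ℝ} (s : ℝ) (hx : x ∈ Ioo 0 1) :
    s * x + binEntropy x ≤ log (1 + exp s) := by
  have h := binEntropy_le_crossEntropy (sigmoid_mem_Ioo s) hx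
  rw [log_sigmoid, log_one_sub_sigmoid] at h
  linarith

lemma mul_sigmoid_add_binEntropy_sigmoid (s : ℝ) :
    s * sigmoid s + binEntropy (sigmoid s) = log (1 + exp s) := by
  simp only [binEntropy, log_inv, log_sigmoid, log_one_sub_sigmoid]
  ring

lemma sympPot_eq_neg_binEntropy_add (t x : ℝ) :
    sympPot t x = -binEntropy x + t * |x - 1 / 2| := by
  simp only [sympPot, binEntropy, log_inv]
  ring

noncomputable def softThreshold (t ρ : ℝ) : ℝ := ρ - max (-t) (min ρ t)

noncomputable def kahlerMaximizer (t ρ : ℝ) : ℝ := sigmoid (softThreshold t ρ)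

section SoftThreshold

variable {t ρ : ℝ}

lemma softThreshold_of_le_neg (h : ρ ≤ -t) : softThreshold t ρ = ρ + t := by
  rw [softThreshold, max_eq_left (min_le_left _ _ |>.trans h)]
  ring

lemma softThreshold_of_mem_Icc (h : ρ ∈ Icc (-t) t) : softThreshold t ρ = 0 := by
  rw [softThreshold, min_eq_left h.2, max_eq_right h.1, sub_self]

lemma softThreshold_of_le (ht : 0 ≤ t) (h : t ≤ ρ) : softThreshold t ρ = ρ - t := by
  rw [softThreshold, min_eq_right h, max_eq_right (by linarith)]

lemma abs_sub_softThreshold_le (ht : 0 ≤ t) : |ρ - softThreshold t ρ| ≤ t := by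
  rw [softThreshold, sub_sub_cancel, abs_le]
  exact ⟨le_max_left _ _, max_le (by linarith) (min_le_right _ _)⟩

lemma kahlerMaximizer_of_mem_Icc (h : ρ ∈ Icc (-t) t) : kahlerMaximizer t ρ = 1 / 2 := by
  rw [kahlerMaximizer, softThreshold_of_mem_Icc h, sigmoid_zero, one_div]

lemma kahlerMaximizer_of_le (ht : 0 ≤ t) (h : t ≤ ρ) :
    kahlerMaximizer t ρ = sigmoid (ρ - t) := by
  rw [kahlerMaximizer, softThreshold_of_le ht h]

lemma sub_softThreshold_mul_kahlerMaximizer_sub_half (ht : 0 ≤ t) :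
    (ρ - softThreshold t ρ) * (kahlerMaximizer t ρ - 1 / 2)
      = t * |kahlerMaximizer t ρ - 1 / 2| := by
  rcases le_or_gt ρ (-t) with hρ | hρ
  · have hm : kahlerMaximizer t ρ ≤ 1 / 2 := by
      rw [kahlerMaximizer, softThreshold_of_le_neg hρ, one_div, ← sigmoid_zero]
      exact sigmoid_le (by linarith)
    rw [softThreshold_of_le_neg hρ, abs_of_nonpos (by linarith)]
    ring
  rcases le_or_gt ρ t with hρ' | hρ'
  · rw [kahlerMaximizer_of_mem_Icc ⟨hρ.le, hρ'⟩]
    simp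
  · have hm : 1 / 2 ≤ kahlerMaximizer t ρ := by
      rw [kahlerMaximizer_of_le ht hρ'.le, one_div, ← sigmoid_zero]
      exact sigmoid_le (by linarith)
    rw [softThreshold_of_le ht hρ'.le, abs_of_nonneg (by linarith)]
    ring

end SoftThreshold

lemma locallyLipschitz_kahlerMaximizer (t : ℝ) : LocallyLipschitz (kahlerMaximizer t) :=
  (contDiff_sigmoid.of_le le_top).locallyLipschitz.comp
    (LocallyLipschitz.id.sub ((LocallyLipschitz.id.min_const t).const_max (-t)))

section KahlerPot

variable {t : ℝ}

lemma mul_sub_sympPot_le (ht : 0 ≤ t) (ρ : ℝ) {x : ℝ} (hx : x ∈ Ioo 0 1) :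
    ρ * x - sympPot t x ≤ log (1 + exp (softThreshold t ρ)) + (ρ - softThreshold t ρ) / 2 := by
  have hdual := mul_add_binEntropy_le (softThreshold t ρ) hx
  have hslope : (ρ - softThreshold t ρ) * (x - 1 / 2) ≤ t * |x - 1 / 2| :=
    calc _ ≤ |ρ - softThreshold t ρ| * |x - 1 / 2| := by rw [← abs_mul]; exact le_abs_self _
      _ ≤ t * |x - 1 / 2| := by gcongr; exact abs_sub_softThreshold_le ht
  rw [sympPot_eq_neg_binEntropy_add]
  linarith

lemma mul_kahlerMaximizer_sub_sympPot (ht : 0 ≤ t) (ρ : ℝ) :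
    ρ * kahlerMaximizer t ρ - sympPot t (kahlerMaximizer t ρ)
      = log (1 + exp (softThreshold t ρ)) + (ρ - softThreshold t ρ) / 2 := by
  have hdual := mul_sigmoid_add_binEntropy_sigmoid (softThreshold t ρ)
  have hslope := sub_softThreshold_mul_kahlerMaximizer_sub_half (ρ := ρ) ht
  rw [sympPot_eq_neg_binEntropy_add]
  unfold kahlerMaximizer at hslope ⊢
  linarith

lemma isGreatest_kahlerPot (ht : 0 ≤ t) (ρ : ℝ) :
    IsGreatest ((fun x => ρ * x - sympPot t x) '' Ioo 0 1)
      (log (1 + exp (softThreshold t ρ)) + (ρ - softThreshold t ρ) / 2) := by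
  refine ⟨⟨kahlerMaximizer t ρ, sigmoid_mem_Ioo _, mul_kahlerMaximizer_sub_sympPot ht ρ⟩, ?_⟩
  rintro _ ⟨x, hx, rfl⟩
  exact mul_sub_sympPot_le ht ρ hx

/-- This is the paper's piecewise formula for `φ_t`: `S_t ρ` is `ρ + t`, `0`, `ρ - t` on the
pieces `ρ ≤ -t`, `|ρ| ≤ t`, `ρ ≥ t`. -/
lemma kahlerPot_eq (ht : 0 ≤ t) (ρ : ℝ) :
    kahlerPot t ρ = log (1 + exp (softThreshold t ρ)) + (ρ - softThreshold t ρ) / 2 :=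
  (isGreatest_kahlerPot ht ρ).csSup_eq

lemma kahlerPot_add_mul_le (ht : 0 ≤ t) (ρ y : ℝ) :
    kahlerPot t ρ + (y - ρ) * kahlerMaximizer t ρ ≤ kahlerPot t y :=
  calc kahlerPot t ρ + (y - ρ) * kahlerMaximizer t ρ
      = y * kahlerMaximizer t ρ - sympPot t (kahlerMaximizer t ρ) := by
        rw [kahlerPot_eq ht, ← mul_kahlerMaximizer_sub_sympPot ht]
        ring
    _ ≤ kahlerPot t y :=
        le_csSup (isGreatest_kahlerPot ht y).bddAbove ⟨_, sigmoid_mem_Ioo _, rfl⟩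

lemma hasDerivAt_kahlerPot (ht : 0 ≤ t) (ρ : ℝ) :
    HasDerivAt (kahlerPot t) (kahlerMaximizer t ρ) ρ :=
  hasDerivAt_of_subgradient (kahlerPot_add_mul_le ht)
    (locallyLipschitz_kahlerMaximizer t).continuous.continuousAt

lemma deriv_kahlerPot (ht : 0 ≤ t) : deriv (kahlerPot t) = kahlerMaximizer t :=
  funext fun ρ => (hasDerivAt_kahlerPot ht ρ).deriv

lemma hasDerivWithinAt_kahlerMaximizer_Iic (ht : 0 < t) :
    HasDerivWithinAt (kahlerMaximizer t) 0 (Iic t) t := by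
  refine (hasDerivWithinAt_const t _ (1 / 2)).congr_of_eventuallyEq ?_
    (kahlerMaximizer_of_mem_Icc ⟨by linarith, le_rfl⟩)
  filter_upwards [inter_mem_nhdsWithin (Iic t) (Ioi_mem_nhds (show -t < t by linarith))]
    with y hy
  exact kahlerMaximizer_of_mem_Icc ⟨le_of_lt hy.2, hy.1⟩

lemma hasDerivWithinAt_kahlerMaximizer_Ici (ht : 0 ≤ t) :
    HasDerivWithinAt (kahlerMaximizer t) (1 / 4) (Ici t) t := by
  have hσ : HasDerivAt (fun ρ => sigmoid (ρ - t)) (1 / 4) t := by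
    have hcomp := (hasDerivAt_sigmoid (t - t)).comp (h := fun ρ => ρ - t) t
      ((hasDerivAt_id' t).sub_const t)
    rw [sub_self, sigmoid_zero] at hcomp
    exact hcomp.congr_deriv (by norm_num)
  exact hσ.hasDerivWithinAt.congr (fun y hy => kahlerMaximizer_of_le ht hy)
    (kahlerMaximizer_of_le ht le_rfl)

end KahlerPot

/-- The toric geodesic ray on `ℂP¹` is `C^{1,1}` but not `C²`: for each `t > 0`,
`φ_t` is differentiable with locally Lipschitz derivative; `φ_t′ = 1/2` on `(−t,t)`
and `φ_t′(ρ) = e^{ρ−t}/(1+e^{ρ−t})` on `(t,∞)`; the left-hand derivative of `φ_t′`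
at `ρ = t` is `0` while the right-hand derivative is `1/4`; in particular `φ_t` is
not twice differentiable at `ρ = t` and not `C²`. -/
theorem kahlerPot_C11_not_C2 (t : ℝ) (ht : 0 < t) :
    (∀ ρ : ℝ, DifferentiableAt ℝ (kahlerPot t) ρ) ∧
    LocallyLipschitz (deriv (kahlerPot t)) ∧
    (∀ ρ ∈ Set.Ioo (-t) t, deriv (kahlerPot t) ρ = 1 / 2) ∧
    (∀ ρ ∈ Set.Ioi t, deriv (kahlerPot t) ρ = Real.exp (ρ - t) / (1 + Real.exp (ρ - t))) ∧
    HasDerivWithinAt (deriv (kahlerPot t)) 0 (Set.Iic t) t ∧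
    HasDerivWithinAt (deriv (kahlerPot t)) (1 / 4) (Set.Ici t) t ∧
    ¬ DifferentiableAt ℝ (deriv (kahlerPot t)) t ∧
    ¬ ContDiff ℝ 2 (kahlerPot t) := by
  have hleft := hasDerivWithinAt_kahlerMaximizer_Iic ht
  have hright := hasDerivWithinAt_kahlerMaximizer_Ici ht.le
  have hkink : ¬ DifferentiableAt ℝ (kahlerMaximizer t) t :=
    not_differentiableAt_of_hasDerivWithinAt_Iic_Ici hleft hright (by norm_num)
  rw [deriv_kahlerPot ht.le]
  refine ⟨fun ρ => (hasDerivAt_kahlerPot ht.le ρ).differentiableAt,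
    locallyLipschitz_kahlerMaximizer t,
    fun ρ hρ => kahlerMaximizer_of_mem_Icc (Ioo_subset_Icc_self hρ),
    fun ρ hρ => by rw [kahlerMaximizer_of_le ht.le (le_of_lt hρ), sigmoid_eq_exp_div],
    hleft, hright, hkink, fun hC2 => hkink ?_⟩
  rw [show (2 : WithTop ℕ∞) = 1 + 1 by norm_num, contDiff_succ_iff_deriv,
    deriv_kahlerPot ht.le] at hC2
  exact hC2.2.2.differentiable one_ne_zero t
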